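/- In a monoidal category, suppose each object A carries an idempotent dec_A such that (i) dec_{A⊗(B⊗C)} ∘ (dec_{A⊗B} ⊗ id_C) = dec_{A⊗(B⊗C)} ∘ (dec_{A⊗B} ⊗ id_C) ∘ dec_{(A⊗B)⊗C}, and (ii) dec_{A⊗B} ∘ (dec_A ⊗ id_B) = dec_A ⊗ dec_B. Then (dec_A ⊗ dec_B) ∘ dec_{A⊗B} ∘ (dec_A ⊗ dec_B) = dec_A ⊗ dec_B. -/

import Mathlib

open CategoryTheory MonoidalCategory

theorem stmt_8 {C : Type*} [Category C] [MonoidalCategory C]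
    (dec : ∀ A : C, A ⟶ A)
    (hidem : ∀ A : C, dec A ≫ dec A = dec A)
    (h1 : ∀ A B X : C,
      ((dec (A ⊗ B) ⊗ₘ 𝟙 X) ≫ (α_ A B X).hom ≫ dec (A ⊗ (B ⊗ X))) =
        dec ((A ⊗ B) ⊗ X) ≫ (dec (A ⊗ B) ⊗ₘ 𝟙 X) ≫ (α_ A B X).hom ≫ dec (A ⊗ (B ⊗ X)))
    (h2 : ∀ A B : C, (dec A ⊗ₘ 𝟙 B) ≫ dec (A ⊗ B) = dec A ⊗ₘ dec B)
    (A B : C) :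
    (dec A ⊗ₘ dec B) ≫ dec (A ⊗ B) ≫ (dec A ⊗ₘ dec B) = dec A ⊗ₘ dec B := by
  have key : (dec A ⊗ₘ dec B) ≫ dec (A ⊗ B) = dec A ⊗ₘ dec B := by
    rw [tensorHom_def' (dec A) (dec B), Category.assoc, ← tensorHom_id, h2, ← id_tensorHom,
      tensorHom_comp_tensorHom, Category.id_comp, hidem, tensorHom_comp_tensorHom,
      Category.id_comp, Category.comp_id]
  rw [← Category.assoc, key, tensorHom_comp_tensorHom, hidem, hidem]
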